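/- (Stationary phase region bound) Let m, n ≥ 1 and t > 0, and set λ_0 = (2mt)^{−1/(2m−1)}. Let g : (0,∞) → ℂ be a C^1 function supported in [λ_0/2, 2λ_0] with ∫ |g'(λ)| dλ ≤ B. Then |∫_0^∞ e^{i(tλ^{2m} − λ)} g(λ) dλ| ≤ C_m (t λ_0^{2m−2})^{−1/2} B, where C_m depends only on m. -/

import Mathlib

/-!
Van der Corput. On `[λ₀/2, 2λ₀]` the phase `φ(λ) = tλ^{2m} - λ` has `φ'' ≥ μ`, where
`μ = 2m(2m-1) t (λ₀/2)^{2m-2}` is a constant multiple of `t λ₀^{2m-2}`. Hence `φ'` grows at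
rate `μ`, so `|φ'(x)| ≥ μ |x - c|` for some `c`. Off `[c - δ, c + δ]`, `δ = μ^{-1/2}`, one
integration by parts (using that `φ'` is monotone) bounds `∫ e^{iφ}` by `4 / (μδ)` per piece,
and the middle piece contributes at most `2δ`; so every primitive `∫_{λ₀/2}^x e^{iφ}` is at most
`10 / √μ`. A second integration by parts against `g`, which vanishes at `2λ₀`, gives the bound
with `∫ |g'|`.
-/

open Complex MeasureTheory Real

open Set intervalIntegral

theorem norm_integral_cexp_I_mul_le_of_le_abs_deriv {φ φ' φ'' : ℝ → ℝ} {a b ε : ℝ}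
    (hab : a ≤ b) (hε : 0 < ε)
    (hφ : ∀ x ∈ Icc a b, HasDerivAt φ (φ' x) x)
    (hφ' : ∀ x ∈ Icc a b, HasDerivAt φ' (φ'' x) x)
    (hφ''_cont : ContinuousOn φ'' (Icc a b))
    (hφ''_nonneg : ∀ x ∈ Icc a b, 0 ≤ φ'' x)
    (hφ'_ge : ∀ x ∈ Icc a b, ε ≤ |φ' x|) :
    ‖∫ x in a..b, cexp (I * φ x)‖ ≤ 4 / ε := by
  rw [← uIcc_of_le hab] at hφ hφ' hφ''_cont hφ''_nonneg hφ'_ge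
  have hφ'_ne : ∀ x ∈ uIcc a b, φ' x ≠ 0 := fun x hx h0 => by
    have := hφ'_ge x hx
    rw [h0, abs_zero] at this
    linarith
  have hφ'_cont : ContinuousOn φ' (uIcc a b) :=
    fun x hx => (hφ' x hx).continuousAt.continuousWithinAt
  have hφ_cont : ContinuousOn φ (uIcc a b) :=
    fun x hx => (hφ x hx).continuousAt.continuousWithinAt
  set v : ℝ → ℂ := fun x => cexp (I * φ x)
  set u : ℝ → ℂ := fun x => ((φ' x)⁻¹ : ℝ)
  have hv : ∀ x ∈ uIcc a b, HasDerivAt v (I * φ' x * v x) x := fun x hx =>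
    ((((hφ x hx).ofReal_comp).const_mul I).cexp).congr_deriv (by ring)
  have hu : ∀ x ∈ uIcc a b, HasDerivAt u (-(φ'' x / φ' x ^ 2) : ℝ) x :=
    fun x hx => (((hφ' x hx).inv (hφ'_ne x hx)).ofReal_comp).congr_deriv (by rw [neg_div])
  have hu_cont : ContinuousOn (fun x => φ'' x / φ' x ^ 2) (uIcc a b) :=
    hφ''_cont.div (hφ'_cont.pow 2) fun x hx => pow_ne_zero 2 (hφ'_ne x hx)
  have hv_cont : ContinuousOn v (uIcc a b) := by fun_prop
  -- `v = -I * u * v'`, so integrating by parts trades `v` for `u' = -φ'' / φ'²`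
  have hIBP := integral_mul_deriv_eq_deriv_mul hu hv
    (continuous_ofReal.comp_continuousOn hu_cont.neg).intervalIntegrable
    ((continuousOn_const.mul (continuous_ofReal.comp_continuousOn hφ'_cont)).mul
      hv_cont).intervalIntegrable
  have huv : ∀ x ∈ uIcc a b, ‖u x * v x‖ ≤ 1 / ε := fun x hx => by
    simp only [u, v, norm_mul, norm_exp_I_mul_ofReal, Complex.norm_real, norm_inv,
      Real.norm_eq_abs, mul_one, one_div]
    exact inv_anti₀ hε (hφ'_ge x hx)
  have hFTC : ∫ x in a..b, φ'' x / φ' x ^ 2 = (φ' a)⁻¹ - (φ' b)⁻¹ := by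
    rw [integral_eq_sub_of_hasDerivAt (f := fun x => -(φ' x)⁻¹)]
    · ring
    · exact fun x hx => ((hφ' x hx).inv (hφ'_ne x hx)).neg.congr_deriv (by ring)
    · exact hu_cont.intervalIntegrable
  have hrem : ‖∫ x in a..b, ((-(φ'' x / φ' x ^ 2) : ℝ) : ℂ) * v x‖ ≤ 2 / ε := by
    refine (norm_integral_le_of_norm_le hab (Filter.Eventually.of_forall fun x hx => ?_)
      hu_cont.intervalIntegrable).trans ?_
    · have hx' := Ioc_subset_Icc_self.trans (uIcc_of_le hab).symm.subset hx
      rw [norm_mul, norm_exp_I_mul_ofReal, mul_one, Complex.norm_real, norm_neg,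
        Real.norm_of_nonneg (div_nonneg (hφ''_nonneg x hx') (sq_nonneg _))]
    · have hbound : ∀ x ∈ uIcc a b, |(φ' x)⁻¹| ≤ 1 / ε := fun x hx => by
        rw [abs_inv, one_div]; exact inv_anti₀ hε (hφ'_ge x hx)
      have ha_inv := hbound a left_mem_uIcc
      have hb_inv := hbound b right_mem_uIcc
      rw [hFTC]
      have h_two : 2 / ε = 1 / ε + 1 / ε := by ring
      linarith [le_abs_self (φ' a)⁻¹, neg_abs_le (φ' b)⁻¹]
  have hv_eq : ∫ x in a..b, v x = -I * ∫ x in a..b, u x * (I * φ' x * v x) := by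
    rw [← intervalIntegral.integral_const_mul]
    refine integral_congr fun x hx => ?_
    have : (φ' x : ℂ) ≠ 0 := ofReal_ne_zero.mpr (hφ'_ne x hx)
    simp only [u, ofReal_inv]
    field_simp
    rw [I_sq]; ring
  calc ‖∫ x in a..b, v x‖
      ≤ ‖u b * v b‖ + ‖u a * v a‖ + ‖∫ x in a..b, ((-(φ'' x / φ' x ^ 2) : ℝ) : ℂ) * v x‖ := by
        rw [hv_eq, norm_mul, norm_neg, norm_I, one_mul, hIBP]
        exact (norm_sub_le _ _).trans (by gcongr; exact norm_sub_le _ _)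
    _ ≤ 1 / ε + 1 / ε + 2 / ε := by
        gcongr
        exacts [huv b right_mem_uIcc, huv a left_mem_uIcc]
    _ = 4 / ε := by ring

theorem exists_mul_abs_sub_le_abs_of_le_deriv {f f' : ℝ → ℝ} {a b μ : ℝ} (hab : a ≤ b)
    (hf : ∀ x ∈ Icc a b, HasDerivAt f (f' x) x) (hf' : ∀ x ∈ Icc a b, μ ≤ f' x) :
    ∃ c ∈ Icc a b, ∀ x ∈ Icc a b, μ * |x - c| ≤ |f x| := by
  have hf_cont : ContinuousOn f (Icc a b) :=
    fun x hx => (hf x hx).continuousAt.continuousWithinAt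
  have hgap : ∀ x ∈ Icc a b, ∀ y ∈ Icc a b, x ≤ y → μ * (y - x) ≤ f y - f x := by
    refine (convex_Icc a b).mul_sub_le_image_sub_of_le_deriv hf_cont
      (fun x hx => (hf x (interior_subset hx)).differentiableAt.differentiableWithinAt)
      fun x hx => ?_
    rw [(hf x (interior_subset hx)).deriv]
    exact hf' x (interior_subset hx)
  have ha : a ∈ Icc a b := left_mem_Icc.mpr hab
  have hb : b ∈ Icc a b := right_mem_Icc.mpr hab
  by_cases hfa : 0 < f a
  · refine ⟨a, ha, fun x hx => ?_⟩
    rw [abs_of_nonneg (sub_nonneg.mpr hx.1)]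
    linarith [hgap a ha x hx hx.1, le_abs_self (f x)]
  by_cases hfb : f b < 0
  · refine ⟨b, hb, fun x hx => ?_⟩
    rw [abs_of_nonpos (sub_nonpos.mpr hx.2)]
    linarith [hgap x hx b hb hx.2, neg_abs_le (f x)]
  -- otherwise `f` changes sign on `[a, b]`, and we take `c` to be a zero of `f`
  obtain ⟨c, hc, hfc⟩ : ∃ c ∈ Icc a b, f c = 0 :=
    intermediate_value_Icc hab hf_cont ⟨not_lt.mp hfa, not_lt.mp hfb⟩
  refine ⟨c, hc, fun x hx => ?_⟩
  rcases le_total c x with hcx | hxc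
  · rw [abs_of_nonneg (sub_nonneg.mpr hcx)]
    linarith [hgap c hc x hx hcx, le_abs_self (f x)]
  · rw [abs_of_nonpos (sub_nonpos.mpr hxc)]
    linarith [hgap x hx c hc hxc, neg_abs_le (f x)]

theorem norm_integral_cexp_I_mul_le_of_le_second_deriv {φ φ' φ'' : ℝ → ℝ} {a b μ : ℝ}
    (hab : a ≤ b) (hμ : 0 < μ)
    (hφ : ∀ x ∈ Icc a b, HasDerivAt φ (φ' x) x)
    (hφ' : ∀ x ∈ Icc a b, HasDerivAt φ' (φ'' x) x)
    (hφ''_cont : ContinuousOn φ'' (Icc a b))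
    (hφ''_ge : ∀ x ∈ Icc a b, μ ≤ φ'' x) :
    ‖∫ x in a..b, cexp (I * φ x)‖ ≤ 10 / √μ := by
  obtain ⟨c, hc, hsep⟩ := exists_mul_abs_sub_le_abs_of_le_deriv hab hφ' hφ''_ge
  have hsqrt : 0 < √μ := sqrt_pos.mpr hμ
  set δ := 1 / √μ
  have hμδ : μ * δ = √μ := by rw [mul_one_div, div_sqrt]
  have hnonstat : ∀ {p q}, a ≤ p → p ≤ q → q ≤ b → (∀ x ∈ Icc p q, δ ≤ |x - c|) →
      ‖∫ x in p..q, cexp (I * φ x)‖ ≤ 4 / √μ := fun hap hpq hqb hδ => by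
    have hsub := Icc_subset_Icc hap hqb
    refine norm_integral_cexp_I_mul_le_of_le_abs_deriv hpq hsqrt (fun x hx => hφ x (hsub hx))
      (fun x hx => hφ' x (hsub hx)) (hφ''_cont.mono hsub)
      (fun x hx => hμ.le.trans (hφ''_ge x (hsub hx))) fun x hx => ?_
    rw [← hμδ]
    exact (mul_le_mul_of_nonneg_left (hδ x hx) hμ.le).trans (hsep x (hsub hx))
  set p := max a (c - δ)
  set q := min b (c + δ)
  have hap : a ≤ p := le_max_left _ _
  have hqb : q ≤ b := min_le_left _ _
  have hpc : p ≤ c := max_le hc.1 (by linarith [show 0 < δ by positivity])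
  have hcq : c ≤ q := le_min hc.2 (by linarith [show 0 < δ by positivity])
  have hleft : ‖∫ x in a..p, cexp (I * φ x)‖ ≤ 4 / √μ := by
    rcases le_total (c - δ) a with h | h
    · rw [show p = a from max_eq_left h, integral_same, norm_zero]; positivity
    · have hp_eq : p = c - δ := max_eq_right h
      refine hnonstat le_rfl hap (hpc.trans hc.2) fun x hx => ?_
      rw [abs_sub_comm, abs_of_nonneg (by linarith [hx.2])]
      linarith [hx.2]
  have hright : ‖∫ x in q..b, cexp (I * φ x)‖ ≤ 4 / √μ := by
    rcases le_total b (c + δ) with h | h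
    · rw [show q = b from min_eq_left h, integral_same, norm_zero]; positivity
    · have hq_eq : q = c + δ := min_eq_right h
      refine hnonstat (hc.1.trans hcq) hqb le_rfl fun x hx => ?_
      rw [abs_of_nonneg (by linarith [hx.1])]
      linarith [hx.1]
  have hmiddle : ‖∫ x in p..q, cexp (I * φ x)‖ ≤ 2 / √μ := by
    refine (norm_integral_le_of_norm_le_const fun x _ => (norm_exp_I_mul_ofReal _).le).trans ?_
    rw [one_mul, abs_of_nonneg (by linarith), show 2 / √μ = 2 * δ by ring]
    linarith [min_le_right b (c + δ), le_max_right a (c - δ)]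
  have hcont : ContinuousOn (fun x => cexp (I * φ x)) (Icc a b) := by
    have : ContinuousOn φ (Icc a b) := fun x hx => (hφ x hx).continuousAt.continuousWithinAt
    fun_prop
  have hint : ∀ {x y}, x ∈ Icc a b → y ∈ Icc a b →
      IntervalIntegrable (fun x => cexp (I * φ x)) volume x y := fun hx hy =>
    (hcont.mono (uIcc_subset_Icc hx hy)).intervalIntegrable
  have hp : p ∈ Icc a b := ⟨hap, hpc.trans hc.2⟩
  have hq : q ∈ Icc a b := ⟨hc.1.trans hcq, hqb⟩
  have hb : b ∈ Icc a b := right_mem_Icc.mpr hab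
  rw [← integral_add_adjacent_intervals (hint (left_mem_Icc.mpr hab) hp) (hint hp hb),
    ← integral_add_adjacent_intervals (hint hp hq) (hint hq hb)]
  calc _ ≤ ‖∫ x in a..p, cexp (I * φ x)‖ + (‖∫ x in p..q, cexp (I * φ x)‖
        + ‖∫ x in q..b, cexp (I * φ x)‖) := by
        grw [norm_add_le, norm_add_le]
    _ ≤ 4 / √μ + (2 / √μ + 4 / √μ) := by gcongr
    _ = 10 / √μ := by ring

theorem norm_integral_mul_le_of_norm_primitive_le {f g : ℝ → ℂ} {a b M : ℝ} (hab : a ≤ b)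
    (hf : Continuous f) (hg : ContDiff ℝ 1 g) (hgb : g b = 0)
    (hM : ∀ x ∈ Icc a b, ‖∫ y in a..x, f y‖ ≤ M) :
    ‖∫ x in a..b, f x * g x‖ ≤ M * ∫ x in a..b, ‖deriv g x‖ := by
  set F : ℝ → ℂ := fun x => ∫ y in a..x, f y
  have hF : ∀ x ∈ uIcc a b, HasDerivAt F (f x) x := fun x _ =>
    (hf.integral_hasStrictDerivAt a x).hasDerivAt
  have hg' : ∀ x ∈ uIcc a b, HasDerivAt g (deriv g x) x := fun x _ =>
    (hg.differentiable one_ne_zero x).hasDerivAt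
  have hg'_cont : Continuous (deriv g) := hg.continuous_deriv le_rfl
  have hIBP := integral_mul_deriv_eq_deriv_mul hF hg' (hf.intervalIntegrable a b)
    (hg'_cont.intervalIntegrable a b)
  have hFa : F a = 0 := integral_same
  rw [hgb, hFa, mul_zero, zero_mul, sub_zero, zero_sub] at hIBP
  calc ‖∫ x in a..b, f x * g x‖ = ‖∫ x in a..b, F x * deriv g x‖ := by
        rw [hIBP, norm_neg]
    _ ≤ ∫ x in a..b, M * ‖deriv g x‖ := by
        refine norm_integral_le_of_norm_le hab (Filter.Eventually.of_forall fun x hx => ?_)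
          ((continuous_const.mul hg'_cont.norm).intervalIntegrable a b)
        rw [norm_mul]
        exact mul_le_mul_of_nonneg_right (hM x (Ioc_subset_Icc_self hx)) (norm_nonneg _)
    _ = M * ∫ x in a..b, ‖deriv g x‖ := intervalIntegral.integral_const_mul _ _

theorem norm_integral_cexp_I_mul_pow_sub_le {k : ℕ} (hk : 2 ≤ k) {t a b : ℝ} (ht : 0 < t)
    (ha : 0 < a) (hab : a ≤ b) :
    ‖∫ l in a..b, cexp (I * ((t * l ^ k - l : ℝ) : ℂ))‖ ≤
      10 / √(t * k * (k - 1) * a ^ (k - 2)) := by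
  have hk_cast : ((k - 1 : ℕ) : ℝ) = k - 1 := by rw [Nat.cast_sub (by omega), Nat.cast_one]
  have hk_sub : k - 1 - 1 = k - 2 := by omega
  have hk_one : (1 : ℝ) < k := by exact_mod_cast hk
  refine norm_integral_cexp_I_mul_le_of_le_second_deriv (φ' := fun l => t * k * l ^ (k - 1) - 1)
    (φ'' := fun l => t * k * (k - 1) * l ^ (k - 2)) hab (by have := sub_pos.mpr hk_one; positivity)
    (fun l _ => (((hasDerivAt_pow k l).const_mul t).sub (hasDerivAt_id l)).congr_deriv
      (by ring))
    (fun l _ => (((hasDerivAt_pow (k - 1) l).const_mul (t * k)).sub_const 1).congr_deriv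
      (by rw [hk_cast, hk_sub]; ring))
    (by fun_prop) fun l hl => ?_
  have := sub_pos.mpr hk_one
  gcongr
  exact hl.1

theorem norm_integral_mul_le_of_support_subset {f g : ℝ → ℂ} {a b M B : ℝ} (hab : a ≤ b)
    (hf : Continuous f) (hg : ContDiff ℝ 1 g) (hsupp : Function.support g ⊆ Icc a b)
    (hM : ∀ x ∈ Icc a b, ‖∫ y in a..x, f y‖ ≤ M) (hB : ∫ x, ‖deriv g x‖ ≤ B) :
    ‖∫ x, f x * g x‖ ≤ M * B := by
  have hM_nonneg : 0 ≤ M := (norm_nonneg _).trans (hM a (left_mem_Icc.mpr hab))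
  have hgb : g b = 0 := by
    have hzero : EqOn g 0 (Ioi b) := fun x hx =>
      Function.notMem_support.mp fun h => (hsupp h).2.not_gt hx
    simpa using hzero.closure hg.continuous continuous_const
      (by rw [closure_Ioi]; exact self_mem_Ici)
  have h_int : ∫ x, f x * g x = ∫ x in a..b, f x * g x := by
    rw [integral_of_le hab, ← integral_Icc_eq_integral_Ioc,
      setIntegral_eq_integral_of_forall_compl_eq_zero]
    intro x hx
    rw [Function.notMem_support.mp fun h => hx (hsupp h), mul_zero]
  have h_deriv : ∫ x in a..b, ‖deriv g x‖ ≤ B := by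
    have hcs : HasCompactSupport g :=
      HasCompactSupport.of_support_subset_isCompact isCompact_Icc hsupp
    refine le_trans ?_ hB
    rw [integral_of_le hab]
    exact setIntegral_le_integral
      ((hg.continuous_deriv le_rfl).norm.integrable_of_hasCompactSupport hcs.deriv.norm)
      (Filter.Eventually.of_forall fun _ => norm_nonneg _)
  rw [h_int]
  exact (norm_integral_mul_le_of_norm_primitive_le hab hf hg hgb hM).trans (by gcongr)

theorem div_sqrt_curvature_eq {m : ℕ} (hm : 1 ≤ m) {t lam : ℝ} (ht : 0 < t) (hlam : 0 < lam)
    (A : ℝ) :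
    A / √(t * ((2 * m : ℕ) : ℝ) * ((2 * m : ℕ) - 1) * (lam / 2) ^ (2 * m - 2)) =
      A / √(2 * m * (2 * m - 1) / 2 ^ (2 * m - 2)) *
        (t * lam ^ (2 * (m : ℝ) - 2)) ^ (-(1 : ℝ) / 2) := by
  have hm_one : (1 : ℝ) ≤ m := by exact_mod_cast hm
  have hc : (0 : ℝ) ≤ 2 * m * (2 * m - 1) / 2 ^ (2 * m - 2) := by
    have : (0 : ℝ) ≤ 2 * m - 1 := by linarith
    positivity
  have hpow : lam ^ (2 * (m : ℝ) - 2) = lam ^ (2 * m - 2) := by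
    rw [← rpow_natCast, Nat.cast_sub (by omega)]
    push_cast
    rfl
  have hX : 0 < t * lam ^ (2 * m - 2) := by positivity
  have hμ : t * ((2 * m : ℕ) : ℝ) * ((2 * m : ℕ) - 1) * (lam / 2) ^ (2 * m - 2) =
      2 * m * (2 * m - 1) / 2 ^ (2 * m - 2) * (t * lam ^ (2 * m - 2)) := by
    rw [div_pow]
    push_cast
    field_simp
  rw [hpow, hμ, sqrt_mul hc, neg_div, rpow_neg hX.le, ← sqrt_eq_rpow]
  field_simp

theorem stationary_phase_region_bound_general (m : ℕ) (hm : 1 ≤ m) :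
    ∃ C : ℝ, 0 < C ∧ ∀ t : ℝ, 0 < t → ∀ g : ℝ → ℂ, ∀ B : ℝ,
      ContDiff ℝ 1 g →
      Function.support g ⊆
        Set.Icc ((2 * m * t) ^ (-(1 : ℝ) / (2 * m - 1)) / 2)
                (2 * (2 * m * t) ^ (-(1 : ℝ) / (2 * m - 1))) →
      (∫ l : ℝ, ‖deriv g l‖) ≤ B →
      ‖∫ l in Set.Ioi (0 : ℝ),
          Complex.exp (Complex.I * ((t * l ^ (2 * m) - l : ℝ) : ℂ)) * g l‖ ≤
        C * (t * ((2 * m * t) ^ (-(1 : ℝ) / (2 * m - 1))) ^ (2 * (m : ℝ) - 2)) ^ (-(1 : ℝ) / 2)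
          * B := by
  have hc_m : (0 : ℝ) < 2 * m * (2 * m - 1) / 2 ^ (2 * m - 2) := by
    have : (1 : ℝ) ≤ m := by exact_mod_cast hm
    have : (0 : ℝ) < 2 * m - 1 := by linarith
    positivity
  refine ⟨10 / √(2 * m * (2 * m - 1) / 2 ^ (2 * m - 2)), by positivity,
    fun t ht g B hg hsupp hB => ?_⟩
  set lam := (2 * m * t) ^ (-(1 : ℝ) / (2 * m - 1))
  have hlam : 0 < lam := rpow_pos_of_pos (by positivity) _
  have hsupp_pos : Function.support g ⊆ Ioi 0 := fun x hx =>
    mem_Ioi.mpr (by linarith [(hsupp hx).1])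
  rw [setIntegral_eq_integral_of_forall_compl_eq_zero fun x hx => by
      rw [Function.notMem_support.mp fun h => hx (hsupp_pos h), mul_zero],
    ← div_sqrt_curvature_eq hm ht hlam]
  exact norm_integral_mul_le_of_support_subset (by linarith) (by fun_prop) hg hsupp
    (fun x hx => norm_integral_cexp_I_mul_pow_sub_le (by omega) ht (by positivity) hx.1) hB

/-- Stationary phase region bound (van der Corput with second derivative lower bound):
for the phase `φ(λ) = tλ^{2m} - λ` with critical point `λ₀ = (2mt)^{-1/(2m-1)}` and a
`C¹` amplitude `g` supported in `[λ₀/2, 2λ₀]` with `∫|g'| ≤ B`,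
`|∫ e^{iφ} g| ≤ C_m (t λ₀^{2m-2})^{-1/2} B`. -/
theorem stationary_phase_region_bound (m n : ℕ) (hm : 1 ≤ m) (hn : 1 ≤ n) :
    ∃ C : ℝ, 0 < C ∧ ∀ t : ℝ, 0 < t → ∀ g : ℝ → ℂ, ∀ B : ℝ,
      ContDiff ℝ 1 g →
      Function.support g ⊆
        Set.Icc ((2 * m * t) ^ (-(1 : ℝ) / (2 * m - 1)) / 2)
                (2 * (2 * m * t) ^ (-(1 : ℝ) / (2 * m - 1))) →
      (∫ l : ℝ, ‖deriv g l‖) ≤ B →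
      ‖∫ l in Set.Ioi (0 : ℝ),
          Complex.exp (Complex.I * ((t * l ^ (2 * m) - l : ℝ) : ℂ)) * g l‖ ≤
        C * (t * ((2 * m * t) ^ (-(1 : ℝ) / (2 * m - 1))) ^ (2 * (m : ℝ) - 2)) ^ (-(1 : ℝ) / 2)
          * B :=
  stationary_phase_region_bound_general m hm
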